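/- Let J ∈ ℝ^{2N×2N} be an invertible skew-symmetric matrix, let H : ℝ → ℝ^{2N×2N} be such that H(t) is symmetric for every t, and let U ∈ ℝ^{2N×k} satisfy UᵀJU = 0. If X̃ : ℝ → ℝ^{2N×2N} is differentiable and satisfies J·X̃′(t) = (I − UUᵀJ)ᵀ H(t) (I − UUᵀJ)·X̃(t) for all t with X̃(0) = I + UUᵀJ, then X(t) := (I − UUᵀJ)X̃(t) is differentiable and satisfies J·X′(t) = H(t)·X(t) for all t with X(0) = I; consequently X̃(t) = (I + UUᵀJ)X(t) for all t. -/

import Mathlib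

open Matrix

/-!
Write `P = UUᵀJ`. Isotropy gives `P² = U(UᵀJU)UᵀJ = 0`, so `1 - P` and `1 + P` are mutually
inverse, and skew-symmetry of `J` gives `(1 + P)ᵀJ = J(1 - P)`. Multiplying the perturbed system
on the left by `1 - P` and using this intertwining relation turns the outer factor `(1 - P)ᵀ`
into `((1 - P)(1 + P))ᵀ = 1`, which leaves the unperturbed system for `(1 - P)X̃`.
-/

section Algebra

variable {R : Type*}

theorem one_sub_mul_one_add_of_mul_self_eq_zero [Ring R] {p : R} (hp : p * p = 0) :
    (1 - p) * (1 + p) = 1 := by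
  rw [sub_mul, one_mul, mul_add, mul_one, hp]
  abel

theorem one_add_mul_one_sub_of_mul_self_eq_zero [Ring R] {p : R} (hp : p * p = 0) :
    (1 + p) * (1 - p) = 1 := by
  rw [add_mul, one_mul, mul_sub, mul_one, hp]
  abel

variable {n m : Type*} [Fintype n] [Fintype m]

theorem Matrix.mul_self_eq_zero_of_isotropic [Semiring R] {J : Matrix n n R} {U : Matrix n m R}
    (hU : Uᵀ * J * U = 0) : U * Uᵀ * J * (U * Uᵀ * J) = 0 := by
  calc U * Uᵀ * J * (U * Uᵀ * J) = U * (Uᵀ * J * U) * (Uᵀ * J) := by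
        simp only [Matrix.mul_assoc]
    _ = 0 := by rw [hU, Matrix.mul_zero, Matrix.zero_mul]

theorem Matrix.transpose_one_add_mul_of_skew [CommRing R] [DecidableEq n] {J : Matrix n n R}
    (hJ : Jᵀ = -J) (U : Matrix n m R) : (1 + U * Uᵀ * J)ᵀ * J = J * (1 - U * Uᵀ * J) := by
  rw [transpose_add, transpose_one, transpose_mul, transpose_mul, transpose_transpose, hJ]
  noncomm_ring

end Algebra

theorem Matrix.hasDerivAt_const_mul_apply {𝕜 : Type*} [NontriviallyNormedField 𝕜]
    {m n p : Type*} [Fintype n] (A : Matrix m n 𝕜) {X : 𝕜 → Matrix n p 𝕜}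
    {X' : Matrix n p 𝕜} {t : 𝕜} (hX : ∀ i j, HasDerivAt (fun s => X s i j) (X' i j) t) (i : m) (j : p) :
    HasDerivAt (fun s => (A * X s) i j) ((A * X') i j) t := by
  simp only [Matrix.mul_apply]
  exact HasDerivAt.fun_sum fun l _ => (hX l j).const_mul _

theorem perturbed_solution_form_general {N k : ℕ}
    (J : Matrix (Fin (2 * N)) (Fin (2 * N)) ℝ)
    (hJskew : Jᵀ = -J)
    (H : ℝ → Matrix (Fin (2 * N)) (Fin (2 * N)) ℝ)
    (U : Matrix (Fin (2 * N)) (Fin k) ℝ) (hU : Uᵀ * J * U = 0)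
    (Xt Xt' : ℝ → Matrix (Fin (2 * N)) (Fin (2 * N)) ℝ)
    (hXt : ∀ t, ∀ i j, HasDerivAt (fun s => Xt s i j) (Xt' t i j) t)
    (hsys : ∀ t, J * Xt' t = (1 - U * Uᵀ * J)ᵀ * H t * (1 - U * Uᵀ * J) * Xt t)
    (hinit : Xt 0 = 1 + U * Uᵀ * J) :
    (∀ t, ∀ i j, HasDerivAt (fun s => ((1 - U * Uᵀ * J) * Xt s : Matrix (Fin (2 * N)) (Fin (2 * N)) ℝ) i j)
        (((1 - U * Uᵀ * J) * Xt' t : Matrix (Fin (2 * N)) (Fin (2 * N)) ℝ) i j) t) ∧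
    (∀ t, J * ((1 - U * Uᵀ * J) * Xt' t) = H t * ((1 - U * Uᵀ * J) * Xt t)) ∧
    ((1 - U * Uᵀ * J) * Xt 0 = 1) ∧
    (∀ t, Xt t = (1 + U * Uᵀ * J) * ((1 - U * Uᵀ * J) * Xt t)) := by
  set P := U * Uᵀ * J
  have hP : P * P = 0 := mul_self_eq_zero_of_isotropic hU
  have hsub_add := one_sub_mul_one_add_of_mul_self_eq_zero hP
  have hadd_sub := one_add_mul_one_sub_of_mul_self_eq_zero hP
  refine ⟨fun t => hasDerivAt_const_mul_apply _ (hXt t), fun t => ?_, by rw [hinit, hsub_add],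
    fun t => by rw [← Matrix.mul_assoc, hadd_sub, Matrix.one_mul]⟩
  calc J * ((1 - P) * Xt' t) = (1 + P)ᵀ * (J * Xt' t) := by
        rw [← Matrix.mul_assoc, ← transpose_one_add_mul_of_skew hJskew U, Matrix.mul_assoc]
    _ = ((1 - P) * (1 + P))ᵀ * H t * ((1 - P) * Xt t) := by
        rw [hsys t, transpose_mul]; noncomm_ring
    _ = H t * ((1 - P) * Xt t) := by rw [hsub_add, transpose_one, Matrix.one_mul]

/-- If `X̃` solves the rank-k perturbed Hamiltonian system
`J X̃' = (I - UUᵀJ)ᵀ H (I - UUᵀJ) X̃`, `X̃(0) = I + UUᵀJ`, then `X = (I - UUᵀJ)X̃` solves the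
unperturbed system `J X' = H X`, `X(0) = I`, and `X̃(t) = (I + UUᵀJ) X(t)` for all `t`. -/
theorem perturbed_solution_form {N k : ℕ}
    (J : Matrix (Fin (2 * N)) (Fin (2 * N)) ℝ)
    (hJskew : Jᵀ = -J) (hJinv : IsUnit J)
    (H : ℝ → Matrix (Fin (2 * N)) (Fin (2 * N)) ℝ)
    (hH : ∀ t, (H t)ᵀ = H t)
    (U : Matrix (Fin (2 * N)) (Fin k) ℝ) (hU : Uᵀ * J * U = 0)
    (Xt Xt' : ℝ → Matrix (Fin (2 * N)) (Fin (2 * N)) ℝ)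
    (hXt : ∀ t, ∀ i j, HasDerivAt (fun s => Xt s i j) (Xt' t i j) t)
    (hsys : ∀ t, J * Xt' t = (1 - U * Uᵀ * J)ᵀ * H t * (1 - U * Uᵀ * J) * Xt t)
    (hinit : Xt 0 = 1 + U * Uᵀ * J) :
    (∀ t, ∀ i j, HasDerivAt (fun s => ((1 - U * Uᵀ * J) * Xt s : Matrix (Fin (2 * N)) (Fin (2 * N)) ℝ) i j)
        (((1 - U * Uᵀ * J) * Xt' t : Matrix (Fin (2 * N)) (Fin (2 * N)) ℝ) i j) t) ∧
    (∀ t, J * ((1 - U * Uᵀ * J) * Xt' t) = H t * ((1 - U * Uᵀ * J) * Xt t)) ∧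
    ((1 - U * Uᵀ * J) * Xt 0 = 1) ∧
    (∀ t, Xt t = (1 + U * Uᵀ * J) * ((1 - U * Uᵀ * J) * Xt t)) :=
  perturbed_solution_form_general J hJskew H U hU Xt Xt' hXt hsys hinit
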